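/- arXiv:1501.07461 — 3 statements merged into one kernel-verified Lean document; each statement's English description precedes it below -/
import Mathlib

section
/- Let E be a real normed vector space and L : E → ℝ be three times continuously differentiable. Let x, x_h ∈ E, set e = x − x_h, and assume the Fréchet derivative of L vanishes at x, i.e. L'(x) = 0. Then L(x) − L(x_h) = (1/2) L'(x_h)(e) − (1/2) ∫₀¹ s(1−s) · D³L(x_h + s·e)[e,e,e] ds, where D³L denotes the third Fréchet derivative (a trilinear form). -/
/-!
Restrict `L` to the segment `g(s) = L(x_h + s • e)`, whose derivatives are
`Dᵏ L(x_h + s • e)[e,…,e]`. Two integrations by parts against the weight `s (1 - s)` give the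
exact error of the trapezoidal rule, `g 1 - g 0 = (g' 0 + g' 1) / 2 - ½ ∫₀¹ s (1 - s) g''' s ds`,
and stationarity kills `g' 1`.
-/

open MeasureTheory Set Interval

theorem integral_sub_mul_sub_mul_eq_of_hasDerivAt {f f' f'' f''' : ℝ → ℝ} {a b : ℝ}
    (hf : ∀ s ∈ [[a, b]], HasDerivAt f (f' s) s)
    (hf' : ∀ s ∈ [[a, b]], HasDerivAt f' (f'' s) s)
    (hf'' : ∀ s ∈ [[a, b]], HasDerivAt f'' (f''' s) s)
    (hf''' : IntervalIntegrable f''' volume a b) :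
    ∫ s in a..b, (s - a) * (b - s) * f''' s = (b - a) * (f' a + f' b) - 2 * (f b - f a) := by
  have hint : ∀ {g g' : ℝ → ℝ}, (∀ s ∈ [[a, b]], HasDerivAt g (g' s) s) →
      IntervalIntegrable g volume a b := fun hg =>
    ContinuousOn.intervalIntegrable fun s hs => (hg s hs).continuousAt.continuousWithinAt
  have hweight : ∀ s ∈ [[a, b]], HasDerivAt (fun s => (s - a) * (b - s)) (a + b - 2 * s) s :=
    fun s _ => (((hasDerivAt_id s).sub_const a).mul ((hasDerivAt_id s).const_sub b)).congr_deriv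
      (by simp only [id]; ring)
  have hslope : ∀ s ∈ [[a, b]], HasDerivAt (fun s => a + b - 2 * s) (-2) s :=
    fun s _ => by simpa using ((hasDerivAt_id s).const_mul 2).const_sub (a + b)
  have hftc : ∫ s in a..b, f' s = f b - f a :=
    intervalIntegral.integral_eq_sub_of_hasDerivAt hf (hint hf')
  rw [intervalIntegral.integral_mul_deriv_eq_deriv_mul hweight hf'' (hint hslope) hf''',
    intervalIntegral.integral_mul_deriv_eq_deriv_mul hslope hf' intervalIntegrable_const
      (hint hf''),
    intervalIntegral.integral_const_mul, hftc]
  ring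

theorem hasDerivAt_iteratedFDeriv_apply_add_smul {𝕜 E F : Type*} [NontriviallyNormedField 𝕜]
    [NormedAddCommGroup E] [NormedSpace 𝕜 E] [NormedAddCommGroup F] [NormedSpace 𝕜 F]
    {f : E → F} {N : WithTop ℕ∞} {n : ℕ} (hf : ContDiff 𝕜 N f) (hn : n < N) (c e : E)
    (t : 𝕜) :
    HasDerivAt (fun t : 𝕜 => iteratedFDeriv 𝕜 n f (c + t • e) (fun _ => e))
      (iteratedFDeriv 𝕜 (n + 1) f (c + t • e) (fun _ => e)) t := by
  have hline : HasDerivAt (fun t : 𝕜 => c + t • e) e t := by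
    simpa using ((hasDerivAt_id t).smul_const e).const_add c
  have hD : HasDerivAt (fun t : 𝕜 => iteratedFDeriv 𝕜 n f (c + t • e))
      (fderiv 𝕜 (iteratedFDeriv 𝕜 n f) (c + t • e) e) t :=
    ((hf.differentiable_iteratedFDeriv hn) _).hasFDerivAt.comp_hasDerivAt t hline
  exact (ContinuousMultilinearMap.apply 𝕜 (fun _ : Fin n => E) F
    (fun _ => e)).hasFDerivAt.comp_hasDerivAt t hD

/-- Abstract error representation underlying the dual weighted residual method:
if `L : E → ℝ` is `C³` and `L'(x) = 0`, then with `e = x - x_h`,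
`L(x) - L(x_h) = ½ L'(x_h)(e) - ½ ∫₀¹ s(1-s) D³L(x_h + s e)[e,e,e] ds`. -/
theorem dwr_error_representation
    {E : Type*} [NormedAddCommGroup E] [NormedSpace ℝ E]
    (L : E → ℝ) (hL : ContDiff ℝ 3 L) (x x_h : E) (e : E) (he : e = x - x_h)
    (hstat : fderiv ℝ L x = 0) :
    L x - L x_h =
      (1 / 2) * fderiv ℝ L x_h e -
        (1 / 2) * ∫ s in (0:ℝ)..1,
          s * (1 - s) * iteratedFDeriv ℝ 3 L (x_h + s • e) (fun _ => e) := by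
  set g : ℕ → ℝ → ℝ := fun n s => iteratedFDeriv ℝ n L (x_h + s • e) (fun _ => e)
  have hderiv : ∀ n < 3, ∀ s ∈ [[(0:ℝ), 1]], HasDerivAt (g n) (g (n + 1) s) s :=
    fun n hn s _ => hasDerivAt_iteratedFDeriv_apply_add_smul hL (by exact_mod_cast hn) x_h e s
  have hcont : Continuous (g 3) := by
    have := hL.continuous_iteratedFDeriv (m := 3) le_rfl
    fun_prop
  have htrapezoid := integral_sub_mul_sub_mul_eq_of_hasDerivAt (hderiv 0 (by norm_num))
    (hderiv 1 (by norm_num)) (hderiv 2 (by norm_num)) (hcont.intervalIntegrable 0 1)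
  have hend : x_h + e = x := by rw [he]; abel
  simp only [g, Nat.reduceAdd, sub_zero, zero_smul, add_zero, one_smul, hend,
    iteratedFDeriv_zero_apply, iteratedFDeriv_one_apply, hstat, zero_apply] at htrapezoid
  rw [htrapezoid]
  ring
end

section
/- Let E be a real normed vector space and L : E → ℝ be three times continuously differentiable. Let x, x_h ∈ E, set e = x − x_h, and assume L'(x) = 0. Then for every x̃ ∈ E satisfying L'(x_h)(x̃ − x_h) = 0 one has L(x) − L(x_h) = (1/2) L'(x_h)(x − x̃) − (1/2) ∫₀¹ s(1−s) · D³L(x_h + s·e)[e,e,e] ds. -/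
/-!
Along the segment `s ↦ x_h + s • e`, `L` becomes a `C³` function of one real variable whose
`k`-th derivative is `DᵏL[e, …, e]`. The error formula of the trapezoidal rule for it, with
`L'(x) = 0` at the right endpoint and Galerkin orthogonality turning `L'(x_h) e` into
`L'(x_h) (x - x̃)` at the left one, gives the identity.
-/

open Set MeasureTheory intervalIntegral

section TaylorAlongLine

variable {E F : Type*} [NormedAddCommGroup E] [NormedSpace ℝ E]
  [NormedAddCommGroup F] [NormedSpace ℝ F] {f : E → F} {N : WithTop ℕ∞} {n : ℕ}

theorem hasDerivAt_iteratedFDeriv_add_smul_apply (hf : ContDiff ℝ N f) (hn : n < N)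
    (a v : E) (s : ℝ) :
    HasDerivAt (fun t : ℝ => iteratedFDeriv ℝ n f (a + t • v) (fun _ => v))
      (iteratedFDeriv ℝ (n + 1) f (a + s • v) (fun _ => v)) s := by
  have hline : HasDerivAt (fun t : ℝ => a + t • v) v s := by
    simpa using ((hasDerivAt_id s).smul_const v).const_add a
  have hDn : HasDerivAt (fun t : ℝ => iteratedFDeriv ℝ n f (a + t • v))
      (fderiv ℝ (iteratedFDeriv ℝ n f) (a + s • v) v) s :=
    ((hf.differentiable_iteratedFDeriv hn) _).hasFDerivAt.comp_hasDerivAt s hline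
  have happly := (ContinuousMultilinearMap.apply ℝ (fun _ : Fin n => E) F
    (fun _ => v)).hasFDerivAt.comp_hasDerivAt s hDn
  rwa [iteratedFDeriv_succ_apply_left]

theorem continuous_iteratedFDeriv_add_smul_apply (hf : ContDiff ℝ N f) (hn : n ≤ N)
    (a v : E) : Continuous (fun t : ℝ => iteratedFDeriv ℝ n f (a + t • v) (fun _ => v)) :=
  (ContinuousMultilinearMap.apply ℝ (fun _ : Fin n => E) F (fun _ => v)).continuous.comp
    ((hf.continuous_iteratedFDeriv hn).comp (by fun_prop))

end TaylorAlongLine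

/-- Two integrations by parts against the weight `(s - a) (b - s)`, which vanishes at both
endpoints. -/
theorem sub_eq_trapezoid_sub_integral {f f' f'' f''' : ℝ → ℝ} {a b : ℝ}
    (hf : ∀ s ∈ uIcc a b, HasDerivAt f (f' s) s)
    (hf' : ∀ s ∈ uIcc a b, HasDerivAt f' (f'' s) s)
    (hf'' : ∀ s ∈ uIcc a b, HasDerivAt f'' (f''' s) s)
    (hf''' : IntervalIntegrable f''' volume a b) :
    f b - f a = (b - a) / 2 * (f' a + f' b) -
      (1 / 2) * ∫ s in a..b, (s - a) * (b - s) * f''' s := by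
  have hint' : IntervalIntegrable f' volume a b :=
    ContinuousOn.intervalIntegrable fun s hs => (hf' s hs).continuousAt.continuousWithinAt
  have hint'' : IntervalIntegrable f'' volume a b :=
    ContinuousOn.intervalIntegrable fun s hs => (hf'' s hs).continuousAt.continuousWithinAt
  have hweight : ∀ s ∈ uIcc a b,
      HasDerivAt (fun s => (s - a) * (b - s)) (a + b - 2 * s) s := fun s _ =>
    (((hasDerivAt_id' s).sub_const a).mul ((hasDerivAt_id' s).const_sub b)).congr_deriv (by ring)
  have hslope : ∀ s ∈ uIcc a b, HasDerivAt (fun s => a + b - 2 * s) (-2) s := fun s _ => by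
    simpa using ((hasDerivAt_id s).const_mul 2).const_sub (a + b)
  have hibp₁ := integral_mul_deriv_eq_deriv_mul hweight hf''
    ((by fun_prop : Continuous fun s => a + b - 2 * s).intervalIntegrable a b) hf'''
  have hibp₂ := integral_mul_deriv_eq_deriv_mul hslope hf' intervalIntegrable_const hint''
  have hftc := integral_eq_sub_of_hasDerivAt hf hint'
  rw [hibp₁, hibp₂, intervalIntegral.integral_const_mul, hftc]
  ring

/-- DWR error representation with Galerkin orthogonality: if `L : E → ℝ` is `C³`,
`L'(x) = 0`, `e = x - x_h`, and `x̃` satisfies `L'(x_h)(x̃ - x_h) = 0`, then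
`L(x) - L(x_h) = ½ L'(x_h)(x - x̃) - ½ ∫₀¹ s(1-s) D³L(x_h + s e)[e,e,e] ds`. -/
theorem dwr_error_representation_galerkin
    {E : Type*} [NormedAddCommGroup E] [NormedSpace ℝ E]
    (L : E → ℝ) (hL : ContDiff ℝ 3 L) (x x_h : E) (e : E) (he : e = x - x_h)
    (hstat : fderiv ℝ L x = 0)
    (x_tilde : E) (hgal : fderiv ℝ L x_h (x_tilde - x_h) = 0) :
    L x - L x_h =
      (1 / 2) * fderiv ℝ L x_h (x - x_tilde) -
        (1 / 2) * ∫ s in (0:ℝ)..1,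
          s * (1 - s) * iteratedFDeriv ℝ 3 L (x_h + s • e) (fun _ => e) := by
  have hderiv : ∀ n < 3, ∀ s ∈ uIcc (0 : ℝ) 1,
      HasDerivAt (fun t : ℝ => iteratedFDeriv ℝ n L (x_h + t • e) (fun _ => e))
        (iteratedFDeriv ℝ (n + 1) L (x_h + s • e) (fun _ => e)) s := fun n hn s _ =>
    hasDerivAt_iteratedFDeriv_add_smul_apply hL (by exact_mod_cast hn) x_h e s
  have htaylor := sub_eq_trapezoid_sub_integral (hderiv 0 (by norm_num))
    (hderiv 1 (by norm_num)) (hderiv 2 (by norm_num))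
    ((continuous_iteratedFDeriv_add_smul_apply hL le_rfl x_h e).intervalIntegrable 0 1)
  have hend : x_h + (1 : ℝ) • e = x := by rw [one_smul, he, add_sub_cancel]
  have hgalerkin : fderiv ℝ L x_h e = fderiv ℝ L x_h (x - x_tilde) := by
    rw [he, ← sub_add_sub_cancel x x_tilde x_h, map_add, hgal, add_zero]
  simpa only [Nat.reduceAdd, iteratedFDeriv_zero_apply, iteratedFDeriv_one_apply, zero_smul,
    add_zero, sub_zero, hend, hstat, zero_apply, hgalerkin] using htaylor
end

section
/- Let σ and σ' be 2×2 real symmetric matrices with eigenvalues λ1(σ) ≥ λ2(σ) and λ1(σ') ≥ λ2(σ'), let δ > 0, and assume |λ1(σ)| + |λ2(σ)| ≥ δ and |λ1(σ')| + |λ2(σ')| ≥ δ. Define the lamination ratio parameter m[σ] = |λ2(σ)|/(|λ1(σ)|+|λ2(σ)|). Then |m[σ] − m[σ']| ≤ (√2/δ)·‖σ − σ'‖_F. -/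
/-!
For symmetric `σ`, `(tr σ)² + (λ₁ - λ₂)² = 2 ‖σ‖_F²`, so `|tr σ|` and `λ₁ - λ₂` are both at
most `√2 ‖σ‖_F`. The gap `λ₁ - λ₂ = |(σ₀₀ - σ₁₁) + 2σ₀₁ i|` is a seminorm of `σ`, so
`|Δ(λ₁ - λ₂)| ≤ (λ₁ - λ₂)(Δσ)`. As `λ₁,₂ = (tr σ ± (λ₁ - λ₂)) / 2`, this gives the
Wielandt–Hoffmann type bound `|Δλ₁| + |Δλ₂| = max |Δ tr σ| |Δ(λ₁ - λ₂)| ≤ √2 ‖Δσ‖_F`.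
Finally `(a, b) ↦ b / (a + b)` is `1/δ`-Lipschitz for the `ℓ¹` distance on
`{a, b ≥ 0, a + b ≥ δ}`, and `|·|` is `1`-Lipschitz.
-/

/-- The larger eigenvalue of a 2×2 real symmetric matrix `A` (eigenvalues in
decreasing order). -/
noncomputable def eigMax (A : Matrix (Fin 2) (Fin 2) ℝ) : ℝ :=
  ((A 0 0 + A 1 1) + Real.sqrt ((A 0 0 - A 1 1) ^ 2 + 4 * (A 0 1) ^ 2)) / 2

/-- The smaller eigenvalue of a 2×2 real symmetric matrix `A` (eigenvalues in
decreasing order). -/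
noncomputable def eigMin (A : Matrix (Fin 2) (Fin 2) ℝ) : ℝ :=
  ((A 0 0 + A 1 1) - Real.sqrt ((A 0 0 - A 1 1) ^ 2 + 4 * (A 0 1) ^ 2)) / 2

/-- The Frobenius norm `‖M‖_F = (Σᵢⱼ Mᵢⱼ²)^{1/2}` of a 2×2 real matrix. -/
noncomputable def frobeniusNorm (M : Matrix (Fin 2) (Fin 2) ℝ) : ℝ :=
  Real.sqrt (∑ i, ∑ j, (M i j) ^ 2)

/-- The lamination ratio parameter `m[σ] = |λ₂(σ)| / (|λ₁(σ)| + |λ₂(σ)|)`. -/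
noncomputable def ratioParam (σ : Matrix (Fin 2) (Fin 2) ℝ) : ℝ :=
  |eigMin σ| / (|eigMax σ| + |eigMin σ|)

lemma abs_div_add_sub_div_add_le {a b a' b' δ : ℝ} (ha : 0 ≤ a) (hb : 0 ≤ b)
    (hδ : 0 < δ) (h : δ ≤ a + b) (h' : δ ≤ a' + b') :
    |b / (a + b) - b' / (a' + b')| ≤ (|a - a'| + |b - b'|) / δ := by
  have hpos : 0 < a + b := hδ.trans_le h
  have hpos' : 0 < a' + b' := hδ.trans_le h'
  have hnum : |b * (a' - a) + a * (b - b')| ≤ (a + b) * (|a - a'| + |b - b'|) :=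
    calc |b * (a' - a) + a * (b - b')| ≤ b * |a - a'| + a * |b - b'| := by
          simpa only [abs_mul, abs_of_nonneg ha, abs_of_nonneg hb, abs_sub_comm a'] using
            abs_add_le (b * (a' - a)) (a * (b - b'))
      _ ≤ (a + b) * (|a - a'| + |b - b'|) := by
          nlinarith [abs_nonneg (a - a'), abs_nonneg (b - b')]
  rw [div_sub_div _ _ hpos.ne' hpos'.ne', abs_div, abs_of_pos (mul_pos hpos hpos'),
    div_le_div_iff₀ (mul_pos hpos hpos') hδ]
  calc |b * (a' + b') - (a + b) * b'| * δ
      = |b * (a' - a) + a * (b - b')| * δ := by congr 2; ring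
    _ ≤ (a + b) * (|a - a'| + |b - b'|) * (a' + b') := by gcongr
    _ = (|a - a'| + |b - b'|) * ((a + b) * (a' + b')) := by ring

lemma abs_half_add_add_abs_half_sub_le {s t c : ℝ} (hs : |s| ≤ c) (ht : |t| ≤ c) :
    |(s + t) / 2| + |(s - t) / 2| ≤ c := by
  rw [abs_le] at hs ht
  rcases abs_cases ((s + t) / 2) with ⟨h₁, -⟩ | ⟨h₁, -⟩ <;>
    rcases abs_cases ((s - t) / 2) with ⟨h₂, -⟩ | ⟨h₂, -⟩ <;> linarith

noncomputable def eigGap (A : Matrix (Fin 2) (Fin 2) ℝ) : ℝ :=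
  Real.sqrt ((A 0 0 - A 1 1) ^ 2 + 4 * (A 0 1) ^ 2)

lemma eigMax_eq (A : Matrix (Fin 2) (Fin 2) ℝ) : eigMax A = (A.trace + eigGap A) / 2 := by
  rw [Matrix.trace_fin_two]; rfl

lemma eigMin_eq (A : Matrix (Fin 2) (Fin 2) ℝ) : eigMin A = (A.trace - eigGap A) / 2 := by
  rw [Matrix.trace_fin_two]; rfl

lemma eigGap_eq_norm (A : Matrix (Fin 2) (Fin 2) ℝ) :
    eigGap A = ‖(⟨A 0 0 - A 1 1, 2 * A 0 1⟩ : ℂ)‖ := by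
  rw [Complex.norm_eq_sqrt_sq_add_sq, eigGap, mul_pow]
  norm_num

lemma abs_eigGap_sub_eigGap_le (A B : Matrix (Fin 2) (Fin 2) ℝ) :
    |eigGap A - eigGap B| ≤ eigGap (A - B) := by
  simp only [eigGap_eq_norm]
  refine (abs_norm_sub_norm_le _ _).trans_eq (congrArg _ ?_)
  apply Complex.ext <;> simp only [Matrix.sub_apply, Complex.sub_re, Complex.sub_im] <;> ring

lemma sq_trace_add_sq_eigGap {M : Matrix (Fin 2) (Fin 2) ℝ} (hM : M.IsSymm) :
    M.trace ^ 2 + eigGap M ^ 2 = 2 * frobeniusNorm M ^ 2 := by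
  have hM₁₀ : M 1 0 = M 0 1 := hM.apply 0 1
  rw [eigGap, frobeniusNorm, Real.sq_sqrt (by positivity), Real.sq_sqrt (by positivity),
    Matrix.trace_fin_two, Fin.sum_univ_two, Fin.sum_univ_two, Fin.sum_univ_two, hM₁₀]
  ring

lemma abs_eigMax_sub_add_abs_eigMin_sub_le {A B : Matrix (Fin 2) (Fin 2) ℝ}
    (hAB : (A - B).IsSymm) :
    |eigMax A - eigMax B| + |eigMin A - eigMin B| ≤ Real.sqrt 2 * frobeniusNorm (A - B) := by
  have hsq := sq_trace_add_sq_eigGap hAB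
  have hF : 0 ≤ Real.sqrt 2 * frobeniusNorm (A - B) :=
    mul_nonneg (Real.sqrt_nonneg 2) (Real.sqrt_nonneg _)
  have hbound {x : ℝ} (hx : x ^ 2 ≤ 2 * frobeniusNorm (A - B) ^ 2) :
      |x| ≤ Real.sqrt 2 * frobeniusNorm (A - B) := by
    refine abs_le_of_sq_le_sq ?_ hF
    rwa [mul_pow, Real.sq_sqrt zero_le_two]
  have hmax : eigMax A - eigMax B = ((A - B).trace + (eigGap A - eigGap B)) / 2 := by
    rw [eigMax_eq, eigMax_eq, Matrix.trace_sub]; ring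
  have hmin : eigMin A - eigMin B = ((A - B).trace - (eigGap A - eigGap B)) / 2 := by
    rw [eigMin_eq, eigMin_eq, Matrix.trace_sub]; ring
  rw [hmax, hmin]
  refine abs_half_add_add_abs_half_sub_le ?_ ?_
  · exact hbound (by linarith [sq_nonneg (eigGap (A - B))])
  · refine (abs_eigGap_sub_eigGap_le A B).trans ((le_abs_self _).trans (hbound ?_))
    linarith [sq_nonneg (A - B).trace]

/-- Lipschitz estimate for the lamination ratio parameter in terms of the stress:
if `|λ₁| + |λ₂| ≥ δ > 0` for both stresses, then
`|m[σ] - m[σ']| ≤ (√2/δ) ‖σ - σ'‖_F`. -/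
theorem ratio_parameter_stress_estimate
    (σ σ' : Matrix (Fin 2) (Fin 2) ℝ) (hσ : σ.IsSymm) (hσ' : σ'.IsSymm)
    (δ : ℝ) (hδ : 0 < δ)
    (h : δ ≤ |eigMax σ| + |eigMin σ|) (h' : δ ≤ |eigMax σ'| + |eigMin σ'|) :
    |ratioParam σ - ratioParam σ'| ≤
      (Real.sqrt 2 / δ) * frobeniusNorm (σ - σ') := by
  calc |ratioParam σ - ratioParam σ'|
      ≤ (|eigMax σ - eigMax σ'| + |eigMin σ - eigMin σ'|) / δ := by
        refine (abs_div_add_sub_div_add_le (abs_nonneg _) (abs_nonneg _) hδ h h').trans ?_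
        exact div_le_div_of_nonneg_right (add_le_add (abs_abs_sub_abs_le_abs_sub _ _)
          (abs_abs_sub_abs_le_abs_sub _ _)) hδ.le
    _ ≤ Real.sqrt 2 * frobeniusNorm (σ - σ') / δ := by
        gcongr
        exact abs_eigMax_sub_add_abs_eigMin_sub_le (hσ.sub hσ')
    _ = (Real.sqrt 2 / δ) * frobeniusNorm (σ - σ') := by ring
end
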